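/- Let Z > 0. For σ > 0 define C₋(σ) = −(√Z/(2πσ))·(2iσ)^{−iZ/(2σ)}·Γ(iZ/(2σ)) ∈ ℂ. Then for every σ > 0: |C₋(σ)|² = 1/( πσ·(1 − e^{−πZ/σ}) ). In particular √(πσ)·|C₋(σ)| → 1 as σ → 0⁺. -/

import Mathlib

/-!
Combining the reflection formula with `Γ(z̄) = conj Γ(z)` gives `|Γ(iy)|² = π/(y sinh πy)`,
and `(2iσ)^{-iy}` has modulus `e^{πy/2}` because `arg(2iσ) = π/2`. With `y = Z/(2σ)` the product
collapses to `e^{πy}/(2πσ sinh πy) = 1/(πσ(1 - e^{-2πy}))`, so `πσ|C₋(σ)|² → 1` as `σ → 0⁺`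
because `e^{-πZ/σ} → 0`.
-/

/-- The connection coefficient
`C₋(σ) = −(√Z/(2πσ))·(2iσ)^{−iZ/(2σ)}·Γ(iZ/(2σ))`, with the principal branch of the
complex power. -/
noncomputable def Cminus (Z σ : ℝ) : ℂ :=
  -((Real.sqrt Z / (2 * Real.pi * σ) : ℝ) : ℂ)
    * (2 * Complex.I * (σ : ℂ)) ^ (-(Complex.I * (Z : ℂ)) / (2 * (σ : ℂ)))
    * Complex.Gamma (Complex.I * (Z : ℂ) / (2 * (σ : ℂ)))

open Real Filter Topology

namespace Complex

open ComplexConjugate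

theorem Gamma_mul_Gamma_neg (z : ℂ) : Gamma z * Gamma (-z) = -π / (z * sin (π * z)) := by
  rcases eq_or_ne z 0 with rfl | hz
  · simp
  have hshift : Gamma (1 - z) = -z * Gamma (-z) := by
    rw [sub_eq_neg_add, Gamma_add_one _ (neg_ne_zero.2 hz)]
  calc Gamma z * Gamma (-z) = Gamma z * Gamma (1 - z) / -z := by
        rw [hshift]; field_simp
    _ = -π / (z * sin (π * z)) := by
        rw [Gamma_mul_Gamma_one_sub, div_div, mul_neg, div_neg, mul_comm, neg_div]

theorem norm_Gamma_ofReal_mul_I_sq (y : ℝ) :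
    ‖Gamma (y * I)‖ ^ 2 = π / (y * Real.sinh (π * y)) := by
  have hsin : sin (π * (y * I)) = Real.sinh (π * y) * I := by
    rw [← mul_assoc, ← ofReal_mul, sin_mul_I, ofReal_sinh]
  have hconj : conj ((y : ℂ) * I) = -(y * I) := by simp
  have : ((‖Gamma (y * I)‖ ^ 2 : ℝ) : ℂ) = (π / (y * Real.sinh (π * y)) : ℝ) := by
    rw [ofReal_pow, ← mul_conj', ← Gamma_conj, hconj, Gamma_mul_Gamma_neg, hsin]
    push_cast
    rw [mul_mul_mul_comm, I_mul_I, mul_neg_one, div_neg, neg_div, neg_neg]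
  exact_mod_cast this

end Complex

theorem Real.two_mul_sinh_eq_exp_mul_one_sub_exp (t : ℝ) :
    2 * sinh t = exp t * (1 - exp (-(2 * t))) := by
  rw [sinh_eq, mul_sub, ← exp_add]; ring_nf

theorem norm_Cminus_sq {Z σ : ℝ} (hZ : 0 < Z) (hσ : 0 < σ) :
    ‖Cminus Z σ‖ ^ 2 = 1 / (π * σ * (1 - exp (-(π * Z / σ)))) := by
  set y := Z / (2 * σ) with hy_def
  have hGamma_arg : Complex.I * Z / (2 * σ) = (y : ℂ) * Complex.I := by push_cast [y]; ring
  have hpow : ‖(2 * Complex.I * (σ : ℂ)) ^ (-(Complex.I * Z) / (2 * σ))‖ = exp (π / 2 * y) := by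
    have hbase : 2 * Complex.I * σ = ((2 * σ : ℝ) : ℂ) * Complex.I := by push_cast; ring
    rw [neg_div, hGamma_arg, Complex.norm_cpow_of_ne_zero (by simp [hσ.ne']), hbase,
      Complex.arg_real_mul _ (by positivity), Complex.arg_I]
    simp [exp_neg]
  have hsinh : 0 < sinh (π * y) := sinh_pos_iff.2 (by positivity)
  calc ‖Cminus Z σ‖ ^ 2
      = Z / (2 * π * σ) ^ 2 * exp (π / 2 * y) ^ 2 * (π / (y * sinh (π * y))) := by
        rw [Cminus, hGamma_arg, norm_mul, norm_mul, mul_pow, mul_pow, hpow,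
          Complex.norm_Gamma_ofReal_mul_I_sq, norm_neg, Complex.norm_real,
          norm_of_nonneg (by positivity), div_pow, sq_sqrt hZ.le]
    _ = exp (π * y) / (π * σ * (2 * sinh (π * y))) := by
        rw [← exp_nat_mul, hy_def]; field_simp; ring_nf
    _ = _ := by
        rw [two_mul_sinh_eq_exp_mul_one_sub_exp, show π * Z / σ = 2 * (π * y) by
          rw [hy_def]; field_simp]
        field_simp

theorem tendsto_exp_neg_div_nhdsGT_zero {c : ℝ} (hc : 0 < c) :
    Tendsto (fun σ : ℝ => exp (-(c / σ))) (𝓝[>] 0) (𝓝 0) :=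
  tendsto_exp_neg_atTop_nhds_zero.comp <|
    (tendsto_inv_nhdsGT_zero.const_mul_atTop hc).congr fun σ => (div_eq_mul_inv c σ).symm

/-- `|C₋(σ)|² = 1/(πσ(1 − e^{−πZ/σ}))` for all `σ > 0`; in particular
`√(πσ)·|C₋(σ)| → 1` as `σ → 0⁺`. -/
theorem stmt14 (Z : ℝ) (hZ : 0 < Z) :
    (∀ σ : ℝ, 0 < σ →
      ‖Cminus Z σ‖ ^ 2 = 1 / (Real.pi * σ * (1 - Real.exp (-(Real.pi * Z / σ))))) ∧
    Filter.Tendsto (fun σ : ℝ => Real.sqrt (Real.pi * σ) * ‖Cminus Z σ‖)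
      (nhdsWithin 0 (Set.Ioi 0)) (nhds 1) := by
  have hnorm (σ : ℝ) (hσ : 0 < σ) := norm_Cminus_sq hZ hσ
  refine ⟨hnorm, ?_⟩
  have hsqrt : ∀ σ ∈ Set.Ioi (0 : ℝ),
      √((1 - exp (-(π * Z / σ)))⁻¹) = √(π * σ) * ‖Cminus Z σ‖ := by
    intro σ (hσ : 0 < σ)
    have hπσ : π * σ ≠ 0 := by positivity
    rw [← sqrt_sq (norm_nonneg _), ← sqrt_mul (by positivity), hnorm σ hσ, one_div, mul_inv,
      ← mul_assoc, mul_inv_cancel₀ hπσ, one_mul]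
  have hlim : Tendsto (fun σ : ℝ => √((1 - exp (-(π * Z / σ)))⁻¹)) (𝓝[>] 0) (𝓝 1) := by
    have hdenom := tendsto_const_nhds (x := (1 : ℝ)).sub
      (tendsto_exp_neg_div_nhdsGT_zero (mul_pos pi_pos hZ))
    simpa using (hdenom.inv₀ (by norm_num)).sqrt
  exact hlim.congr' (eventually_nhdsWithin_of_forall hsqrt)
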